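/- arXiv:2203.06102 — 2 statements merged into one kernel-verified Lean document; each statement's English description precedes it below -/
import Mathlib

section
/- Suppose the level-2 loss is L₂(Q, y) = 𝔼_{θ∼Q}[L₁(θ, y)], where L₁ satisfies L₁(𝔼_{θ∼Q}[θ], y) ≤ 𝔼_{θ∼Q}[L₁(θ, y)] for all Q and y. Then for any finite dataset y⁽¹⁾,…,y⁽ᴺ⁾ and any distribution Q on Δ_K, the Dirac measure δ_{θ̃} at θ̃ = 𝔼_{θ∼Q̃}[θ], where Q̃ minimizes the empirical risk among all Q, satisfies (1/N)∑ₙ L₂(δ_{θ̃}, y⁽ⁿ⁾) ≤ (1/N)∑ₙ L₂(Q, y⁽ⁿ⁾). In particular, there is always an empirical loss minimizer that is a Dirac measure. -/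
open MeasureTheory

/-- if the level-2 loss is the expected level-1 loss and `L1` satisfies
the Jensen property, then the Dirac measure at the mean of an empirical risk
minimiser `Qt` achieves empirical risk at most that of any admissible `Q`;
in particular there is always an empirical loss minimiser that is Dirac. -/
theorem stmt1 {K N : ℕ} {Y : Type*} [Fintype Y]
    (L1 : (Fin K → ℝ) → Y → ℝ)
    (hmeas : ∀ y, StronglyMeasurable fun θ => L1 θ y)
    (𝒬 : Set (Measure (Fin K → ℝ)))
    (hjensen : ∀ Q ∈ 𝒬, ∀ y, L1 (∫ θ, θ ∂Q) y ≤ ∫ θ, L1 θ y ∂Q)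
    (ys : Fin N → Y)
    (R : Measure (Fin K → ℝ) → ℝ)
    (hR : ∀ Q, R Q = (1 / N : ℝ) * ∑ n, ∫ θ, L1 θ (ys n) ∂Q)
    (Qt : Measure (Fin K → ℝ)) (hQt : Qt ∈ 𝒬)
    (hmin : ∀ Q ∈ 𝒬, R Qt ≤ R Q) :
    ∀ Q ∈ 𝒬, R (Measure.dirac (∫ θ, θ ∂Qt)) ≤ R Q := by
  intro Q hQ
  have key : R (Measure.dirac (∫ θ, θ ∂Qt)) ≤ R Qt := by
    rw [hR, hR]
    apply mul_le_mul_of_nonneg_left _ (by positivity)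
    apply Finset.sum_le_sum
    intro n _
    rw [integral_dirac' _ _ (hmeas (ys n))]
    exact hjensen Qt hQt (ys n)
  exact key.trans (hmin Q hQ)
end

section
/- Consider the level-2 loss L₂(Q, y) = 𝔼_{θ∼Q}[L₁(θ, y)] − λ·H(Q) with regularisation parameter λ > 0 and entropy H, and suppose L₁ : Δ_K × 𝒴 → ℝ₊ satisfies: for every non-Dirac measure Q there exists ε_Q > 0 such that 𝔼_{θ∼Q}[L₁(θ, y)] − L₁(𝔼_{θ∼Q}[θ], y) ≥ ε_Q for all y. If λ ≤ inf over non-Dirac Q of ε_Q / H(Q), then for every finite dataset y⁽¹⁾,…,y⁽ᴺ⁾ and every non-Dirac Q, the Dirac measure at 𝔼_{θ∼Q̃}[θ] (where Q̃ minimizes the empirical level-2 risk among non-Dirac measures) achieves empirical risk at most that of Q. Hence the empirical loss minimizer is a Dirac measure regardless of N. -/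
open MeasureTheory

/-- for the entropy-regularised level-2 loss
`L₂(Q,y) = 𝔼_{θ∼Q}[L₁(θ,y)] − λ H(Q)`, if for each non-Dirac `Q` the Jensen gap is
at least `ε_Q > 0` and `λ ≤ inf ε_Q / H(Q)` (i.e. `λ·H(Q) ≤ ε_Q`), then the Dirac
measure at the mean of the minimiser over non-Dirac measures achieves empirical
risk at most that of any non-Dirac `Q`: the empirical loss minimiser is Dirac. -/
theorem stmt7 {K N : ℕ} {Y : Type*}
    (L1 : (Fin K → ℝ) → Y → ℝ) (lam : ℝ) (hlam : 0 < lam)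
    (H : Measure (Fin K → ℝ) → ℝ)
    (hHpos : ∀ Q : Measure (Fin K → ℝ), IsProbabilityMeasure Q →
      (¬ ∃ θ, Q = Measure.dirac θ) → 0 < H Q)
    (hHdirac : ∀ θ, H (Measure.dirac θ) = 0)
    (ε : Measure (Fin K → ℝ) → ℝ)
    (hε : ∀ Q : Measure (Fin K → ℝ), IsProbabilityMeasure Q →
      (¬ ∃ θ, Q = Measure.dirac θ) →
      0 < ε Q ∧ ∀ y, ε Q ≤ (∫ θ, L1 θ y ∂Q) - L1 (∫ θ, θ ∂Q) y)
    (hlam' : ∀ Q : Measure (Fin K → ℝ), IsProbabilityMeasure Q →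
      (¬ ∃ θ, Q = Measure.dirac θ) → lam * H Q ≤ ε Q)
    (hmeas : ∀ y, StronglyMeasurable fun θ => L1 θ y)
    (ys : Fin N → Y)
    (R : Measure (Fin K → ℝ) → ℝ)
    (hR : ∀ Q, R Q = (1 / N : ℝ) * ∑ n, ((∫ θ, L1 θ (ys n) ∂Q) - lam * H Q))
    (Qt : Measure (Fin K → ℝ)) (hQtP : IsProbabilityMeasure Qt)
    (hQtnd : ¬ ∃ θ, Qt = Measure.dirac θ)
    (hQtmin : ∀ Q : Measure (Fin K → ℝ), IsProbabilityMeasure Q →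
      (¬ ∃ θ, Q = Measure.dirac θ) → R Qt ≤ R Q) :
    ∀ Q : Measure (Fin K → ℝ), IsProbabilityMeasure Q →
      (¬ ∃ θ, Q = Measure.dirac θ) →
      R (Measure.dirac (∫ θ, θ ∂Qt)) ≤ R Q := by
  intro Q hQP hQnd
  refine le_trans ?_ (hQtmin Q hQP hQnd)
  rw [hR, hR]
  apply mul_le_mul_of_nonneg_left _ (by positivity)
  apply Finset.sum_le_sum
  intro n _
  rw [integral_dirac' _ _ (hmeas (ys n)), hHdirac]
  have h1 := (hε Qt hQtP hQtnd).2 (ys n)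
  have h2 := hlam' Qt hQtP hQtnd
  linarith
end
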